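/- arXiv:2110.15330 — 4 statements merged into one kernel-verified Lean document; each statement's English description precedes it below -/
import Mathlib

section
/- Let N be a bipartite quantum channel from system AB to system AB' (A of dimension dA, B of dimension dB, B' of dimension dB') that is A↛B' semi-causal, and let J denote its Choi matrix, a positive semidefinite matrix on (input A) ⊗ (input B) ⊗ (output A) ⊗ (output B'). Then the partial trace of J over the output-A factor factorizes as J_{ABB'} = u_A ⊗ J_{BB'}, where J_{BB'} is the partial trace of J over both the input-A and output-A factors and u_A = I_{dA}/dA. -/
open Matrix Kronecker
open scoped ComplexOrder

noncomputable section

open scoped Classical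

/-- Square complex matrices of size `n`. -/
abbrev Mat (n : ℕ) := Matrix (Fin n) (Fin n) ℂ

/-- Bipartite matrices on `ℂ^a ⊗ ℂ^b`. -/
abbrev BMat (a b : ℕ) := Matrix (Fin a × Fin b) (Fin a × Fin b) ℂ

/-- A density matrix: positive semidefinite with trace one. -/
def IsDensity {ι : Type} [Fintype ι] (ρ : Matrix ι ι ℂ) : Prop :=
  ρ.PosSemidef ∧ ρ.trace = 1

/-- The maximally mixed state `I/n`. -/
def uMat (n : ℕ) : Mat n := (n : ℂ)⁻¹ • 1

/-- Choi matrix of a map on matrices. -/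
def choi {ι κ : Type} [Fintype ι] [DecidableEq ι]
    (Φ : Matrix ι ι ℂ → Matrix κ κ ℂ) : Matrix (ι × κ) (ι × κ) ℂ :=
  fun p q => Φ (Matrix.single p.1 q.1 1) p.2 q.2

/-- Quantum channel: linear, trace preserving, completely positive map. -/
def IsCPTP {ι κ : Type} [Fintype ι] [DecidableEq ι] [Fintype κ]
    (Φ : Matrix ι ι ℂ → Matrix κ κ ℂ) : Prop :=
  IsLinearMap ℂ Φ ∧ (∀ X, (Φ X).trace = X.trace) ∧ (choi Φ).PosSemidef

/-- Completely positive (not necessarily trace-preserving) map. -/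
def IsCP {ι κ : Type} [Fintype ι] [DecidableEq ι] [Fintype κ]
    (Φ : Matrix ι ι ℂ → Matrix κ κ ℂ) : Prop :=
  IsLinearMap ℂ Φ ∧ (choi Φ).PosSemidef

/-- Partial trace over the first tensor factor. -/
def ptraceA {α β : Type} [Fintype α] (M : Matrix (α × β) (α × β) ℂ) :
    Matrix β β ℂ := fun j j' => ∑ i, M (i, j) (i, j')

/-- Partial trace over the second tensor factor. -/
def ptraceB {α β : Type} [Fintype β] (M : Matrix (α × β) (α × β) ℂ) :
    Matrix α α ℂ := fun i i' => ∑ j, M (i, j) (i', j)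

/-- The map `Φ ⊗ id` acting on the first tensor factor. -/
def lTensorId {α α' β : Type} (Φ : Matrix α α ℂ → Matrix α' α' ℂ)
    (X : Matrix (α × β) (α × β) ℂ) : Matrix (α' × β) (α' × β) ℂ :=
  fun p q => Φ (fun k k' => X (k, p.2) (k', q.2)) p.1 q.1

/-- The map `id ⊗ Φ` acting on the second tensor factor. -/
def rTensorId {α β β' : Type} (Φ : Matrix β β ℂ → Matrix β' β' ℂ)
    (X : Matrix (α × β) (α × β) ℂ) : Matrix (α × β') (α × β') ℂ :=
  fun p q => Φ (fun k k' => X (p.1, k) (q.1, k')) p.2 q.2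

/-- `A ↛ B'` semi-causality of a bipartite channel. -/
def SemiCausal {a b b' : ℕ} (N : BMat a b → BMat a b') : Prop :=
  ∀ M : Mat a → Mat a, IsCPTP M →
    ∀ X : BMat a b, ptraceA (N (lTensorId M X)) = ptraceA (N X)

/-- Conditional unitality of a bipartite channel. -/
def CondUnital {a b b' : ℕ} (N : BMat a b → BMat a b') : Prop :=
  ∀ ρ : Mat b, IsDensity ρ →
    ∃ σ : Mat b', IsDensity σ ∧ N (uMat a ⊗ₖ ρ) = uMat a ⊗ₖ σ

/-- Conditionally unital semi-causal channels. -/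
def CUSC {a b b' : ℕ} (N : BMat a b → BMat a b') : Prop :=
  IsCPTP N ∧ CondUnital N ∧ SemiCausal N

/-- The channel `X ↦ V X V†` associated with a matrix `V`. -/
def isomChannel {a a' : ℕ} (V : Matrix (Fin a') (Fin a) ℂ) (X : Mat a) : Mat a' :=
  V * X * Vᴴ

/-- Conditional majorization `σ ≾_A ρ`. -/
def CondMajor {a' b' a b : ℕ} (σ : BMat a' b') (ρ : BMat a b) : Prop :=
  (a ≤ a' ∧ ∃ V : Matrix (Fin a') (Fin a) ℂ, Vᴴ * V = 1 ∧
      ∃ N : BMat a b → BMat a b', CUSC N ∧ σ = lTensorId (isomChannel V) (N ρ)) ∨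
  (a' ≤ a ∧ ∃ U : Matrix (Fin a) (Fin a') ℂ, Uᴴ * U = 1 ∧
      ∃ N : BMat a b → BMat a b', CUSC N ∧ lTensorId (isomChannel U) σ = N ρ)

/-- The tensor product `ρ_{AB} ⊗ τ_{A'B'}` regrouped as a state on `(AA')(BB')`. -/
def prodState {a b a' b' : ℕ} (ρ : BMat a b) (τ : BMat a' b') :
    BMat (a * a') (b * b') := fun p q =>
  ρ ((finProdFinEquiv.symm p.1).1, (finProdFinEquiv.symm p.2).1)
    ((finProdFinEquiv.symm q.1).1, (finProdFinEquiv.symm q.2).1) *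
  τ ((finProdFinEquiv.symm p.1).2, (finProdFinEquiv.symm p.2).2)
    ((finProdFinEquiv.symm q.1).2, (finProdFinEquiv.symm q.2).2)

/-- A conditional entropy: a real function on bipartite density matrices of all
finite dimensions, monotone under conditional majorization, additive under tensor
products, and normalized to `1` on the one-qubit maximally mixed state. -/
structure CondEntropy where
  H : ∀ {a b : ℕ}, BMat a b → ℝ
  mono : ∀ {a b a' b' : ℕ} (ρ : BMat a b) (σ : BMat a' b'),
    IsDensity ρ → IsDensity σ → CondMajor σ ρ → H ρ ≤ H σ
  additive : ∀ {a b a' b' : ℕ} (ρ : BMat a b) (τ : BMat a' b'),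
    IsDensity ρ → IsDensity τ → H (prodState ρ τ) = H ρ + H τ
  normalized : H (uMat 2 ⊗ₖ (1 : Mat 1)) = 1

/-- Maximally entangled state `φ⁺` on `ℂ^d ⊗ ℂ^d`. -/
def maxEnt (d : ℕ) : BMat d d :=
  fun p q => if p.1 = p.2 ∧ q.1 = q.2 then (d : ℂ)⁻¹ else 0

/-- The sum of the `k` largest values of `f`. -/
def sumTopK {ι : Type} [Fintype ι] [DecidableEq ι] (k : ℕ) (f : ι → ℝ) : ℝ :=
  (Finset.univ.powerset.filter fun s : Finset ι => s.card ≤ k).sup'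
    ⟨∅, Finset.mem_filter.mpr ⟨Finset.mem_powerset.mpr (Finset.empty_subset _), by simp⟩⟩
    fun s => ∑ i ∈ s, f i

/-- Ky Fan `k`-norm (sum of the `k` largest eigenvalues) of a hermitian matrix. -/
def kyFan {ι : Type} [Fintype ι] [DecidableEq ι] (k : ℕ) (X : Matrix ι ι ℂ) : ℝ :=
  if h : X.IsHermitian then sumTopK k h.eigenvalues else 0

/-- The rank-one projector `|v⟩⟨v|`. -/
def projv {n : ℕ} (v : Fin n → ℂ) : Mat n := fun i j => v i * star (v j)

/-- A rank-one projective measurement, given by an orthonormal family of vectors. -/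
def IsRankOneMeas {n : ℕ} (u : Fin n → Fin n → ℂ) : Prop :=
  ∀ z z', (∑ i, star (u z i) * u z' i) = if z = z' then 1 else 0

/-- A column-stochastic matrix. -/
def ColStochastic {a c : ℕ} (T : Matrix (Fin a) (Fin c) ℝ) : Prop :=
  (∀ w z, 0 ≤ T w z) ∧ ∀ z, ∑ w, T w z = 1

/-- Reward of the bipartite gambling game `(T, 0)` (no adversary). -/
def R0 {a b c : ℕ} (T : Matrix (Fin a) (Fin c) ℝ) (ρ : BMat a b) : ℝ :=
  ⨆ u : {u : Fin b → Fin b → ℂ // IsRankOneMeas u}, ⨆ f : Fin b → Fin c,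
    ∑ z, ∑ w, T w (f z) *
      kyFan (w.1 + 1)
        (ptraceB (((1 : Mat a) ⊗ₖ projv (u.1 z)) * ρ * ((1 : Mat a) ⊗ₖ projv (u.1 z))))

/-- Reward of the bipartite gambling game `(T, p)`. -/
def Rgame {a b c : ℕ} (T : Matrix (Fin a) (Fin c) ℝ) (p : ℝ) (ρ : BMat a b) : ℝ :=
  p * (⨅ v : {v : Fin a → Fin a → ℂ // IsRankOneMeas v},
        R0 T (∑ j, (projv (v.1 j) ⊗ₖ (1 : Mat b)) * ρ * (projv (v.1 j) ⊗ₖ (1 : Mat b)))) +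
  (1 - p) * R0 T ρ

/-- Reward of a quantum-channel gambling game `ρ_{ABX} = Σ_x p_x ρ^{(x)}_{AB} ⊗ |x⟩⟨x|`
for a channel `N` with output system `A`. -/
def Rch {n m dA b ℓ : ℕ} (N : Mat n → Mat m)
    (p : Fin ℓ → ℝ) (ρx : Fin ℓ → BMat dA b) : ℝ :=
  ⨆ E : {E : Mat dA → Mat n // IsCPTP E},
    ∑ x, p x * kyFan (x.1 + 1) (lTensorId (fun Y => N (E.1 Y)) (ρx x))

/-- The classical channel induced by a column-stochastic transition matrix. -/
def classicalChannel {x y : ℕ} (P : Matrix (Fin y) (Fin x) ℝ) : Mat x → Mat y :=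
  fun ρ => Matrix.of fun i j => if i = j then ∑ k, (P i k : ℂ) * ρ k k else 0

/-- Classical game reward `Prob_T` of a classical channel with transition matrix `P`. -/
def ProbT {yd xd wn zn : ℕ} (P : Matrix (Fin yd) (Fin xd) ℝ)
    (T : Matrix (Fin wn) (Fin zn) ℝ) : ℝ :=
  ∑ z, ⨆ x : Fin xd, ∑ w, T w z * sumTopK (w.1 + 1) (fun i => P i x)

/-- A joint probability matrix. -/
def JointProb {m n : ℕ} (P : Matrix (Fin m) (Fin n) ℝ) : Prop :=
  (∀ x y, 0 ≤ P x y) ∧ ∑ x, ∑ y, P x y = 1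

/-- A row-stochastic matrix. -/
def RowStochastic {n n' : ℕ} (t : Matrix (Fin n) (Fin n') ℝ) : Prop :=
  (∀ y w, 0 ≤ t y w) ∧ ∀ y, ∑ w, t y w = 1

/-- A doubly stochastic matrix. -/
def IsDoublyStochastic {m : ℕ} (d : Matrix (Fin m) (Fin m) ℝ) : Prop :=
  (∀ i j, 0 ≤ d i j) ∧ (∀ i, ∑ j, d i j = 1) ∧ (∀ j, ∑ i, d i j = 1)

/-- The quantum channel induced by a (doubly) stochastic matrix. -/
def dsChannel {m : ℕ} (d : Matrix (Fin m) (Fin m) ℝ) : Mat m → Mat m :=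
  fun ρ => Matrix.of fun x x' => if x = x' then ∑ y, (d x y : ℂ) * ρ y y else 0

/-- Diagonal bipartite state associated with a joint probability matrix. -/
def classicalState {m n : ℕ} (P : Matrix (Fin m) (Fin n) ℝ) : BMat m n :=
  Matrix.of fun p q => if p = q then (P p.1 p.2 : ℂ) else 0

/-- von Neumann entropy `S(ρ) = -Σ λ_i log₂ λ_i`. -/
def vnEntropy {ι : Type} [Fintype ι] [DecidableEq ι] (ρ : Matrix ι ι ℂ) : ℝ :=
  if h : ρ.IsHermitian then -∑ i, h.eigenvalues i * Real.logb 2 (h.eigenvalues i) else 0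

/-- von Neumann conditional entropy `H(A|B) = S(ρ_AB) - S(ρ_B)`. -/
def condVN {a b : ℕ} (ρ : BMat a b) : ℝ := vnEntropy ρ - vnEntropy (ptraceA ρ)

/-- Classical game reward for a classical bipartite state with joint distribution `q`
(`y` on `A`, `z` on `B`). -/
def ProbTstate {a b c : ℕ} (T : Matrix (Fin a) (Fin c) ℝ)
    (q : Matrix (Fin a) (Fin b) ℝ) : ℝ :=
  ∑ z, ⨆ z' : Fin c, ∑ w, T w z' * sumTopK (w.1 + 1) (fun y => q y z)

/-!
Semi-causality is tested against the completely depolarizing channel `Y ↦ tr(Y) u_A` on `A`.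
It sends `E_{ii'} ⊗ E_{jj'}` to `(u_A)_{ii'} (1 ⊗ E_{jj'})`, so the `A`-traced output of `N` on
`E_{ii'} ⊗ E_{jj'}`, an entry of `J_{ABB'}`, equals `(u_A)_{ii'}` times its `A`-traced output on
`1 ⊗ E_{jj'}`, which is an entry of `J_{BB'}`.
-/

def depolarizing (a : ℕ) (Y : Mat a) : Mat a := Y.trace • uMat a

lemma trace_uMat (a : ℕ) [NeZero a] : (uMat a).trace = 1 := by
  simp [uMat, Matrix.trace_smul, Matrix.trace_one]

lemma choi_depolarizing (a : ℕ) : choi (depolarizing a) = (a : ℂ)⁻¹ • 1 := by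
  ext ⟨p₁, p₂⟩ ⟨q₁, q₂⟩
  by_cases h₁ : p₁ = q₁ <;> by_cases h₂ : p₂ = q₂ <;>
    simp [choi, depolarizing, uMat, Matrix.trace_single_eq_of_ne, h₁, h₂]

lemma isCPTP_depolarizing (a : ℕ) [NeZero a] : IsCPTP (depolarizing a) := by
  refine ⟨⟨fun X Y => by simp [depolarizing, add_smul],
    fun c X => by simp [depolarizing, smul_smul]⟩, fun X => ?_, ?_⟩
  · simp [depolarizing, Matrix.trace_smul, trace_uMat]
  · rw [choi_depolarizing]
    exact Matrix.PosSemidef.one.smul (by simp)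

lemma depolarizing_single (a : ℕ) (i i' : Fin a) :
    depolarizing a (Matrix.single i i' 1) = uMat a i i' • 1 := by
  by_cases h : i = i' <;>
    simp [depolarizing, uMat, Matrix.trace_single_eq_of_ne, h]

lemma lTensorId_single {α α' β : Type} [DecidableEq α] [DecidableEq β]
    (Φ : Matrix α α ℂ → Matrix α' α' ℂ) (hΦ : Φ 0 = 0) (i i' : α) (j j' : β) :
    lTensorId Φ (Matrix.single (i, j) (i', j') 1) =
      Φ (Matrix.single i i' 1) ⊗ₖ Matrix.single j j' 1 := by
  ext ⟨p₁, p₂⟩ ⟨q₁, q₂⟩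
  have hblock : (fun k k' => Matrix.single (i, j) (i', j') (1 : ℂ) (k, p₂) (k', q₂)) =
      if j = p₂ ∧ j' = q₂ then Matrix.single i i' 1 else 0 := by
    ext k k'
    split_ifs with h
    · simp [Matrix.single_apply, h]
    · simp only [Matrix.single_apply, Matrix.zero_apply, Prod.mk.injEq]
      grind
  simp only [lTensorId, hblock, kroneckerMap_apply]
  split_ifs with h <;> simp [hΦ, h]

lemma one_kronecker_single {α β : Type} [Fintype α] [DecidableEq α] [DecidableEq β] (j j' : β) :
    (1 : Matrix α α ℂ) ⊗ₖ Matrix.single j j' 1 = ∑ m, Matrix.single (m, j) (m, j') 1 := by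
  ext ⟨p₁, p₂⟩ ⟨q₁, q₂⟩
  simp only [kroneckerMap_apply, Matrix.sum_apply, Matrix.single_apply, Matrix.one_apply,
    Prod.mk.injEq]
  by_cases h : p₁ = q₁ <;> simp [h, ite_and, Finset.sum_ite_eq']

/-- the Choi matrix of a semi-causal bipartite channel satisfies
`J_{ABB'} = u_A ⊗ J_{BB'}` (stated entrywise). -/
theorem semiCausal_choi_factorizes {a b b' : ℕ}
    (N : BMat a b → BMat a b') (hN : IsCPTP N) (hsc : SemiCausal N)
    (i i' : Fin a) (j j' : Fin b) (k k' : Fin b') :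
    (∑ l : Fin a, choi N ((i, j), (l, k)) ((i', j'), (l, k'))) =
      uMat a i i' *
        ∑ mm : Fin a, ∑ l : Fin a, choi N ((mm, j), (l, k)) ((mm, j'), (l, k')) := by
  have : NeZero a := ⟨i.pos.ne'⟩
  let Nₗ : BMat a b →ₗ[ℂ] BMat a b' := IsLinearMap.mk' N hN.1
  calc (∑ l : Fin a, choi N ((i, j), (l, k)) ((i', j'), (l, k')))
      = ptraceA (N (Matrix.single (i, j) (i', j') 1)) k k' := rfl
    _ = ptraceA (N (lTensorId (depolarizing a) (Matrix.single (i, j) (i', j') 1))) k k' := by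
      rw [hsc _ (isCPTP_depolarizing a)]
    _ = uMat a i i' * ptraceA (Nₗ (1 ⊗ₖ Matrix.single j j' 1)) k k' := by
      rw [lTensorId_single _ (by simp [depolarizing]), depolarizing_single, smul_kronecker,
        show N = Nₗ from rfl, map_smul]
      simp only [ptraceA, Matrix.smul_apply, smul_eq_mul, Finset.mul_sum]
    _ = _ := by
      rw [one_kronecker_single, map_sum]
      simp only [ptraceA, Matrix.sum_apply]
      rw [Finset.sum_comm]
      rfl
end
end

section
/- For any conditional entropy H and any density matrices ω on ℂ^{dA}, τ on ℂ^{dB}, τ' on ℂ^{dB'}: H(A|B)_{ω⊗τ} = H(A|B')_{ω⊗τ'}. In particular, the value of H on any product state ω_A ⊗ τ_B equals H(A)_ω, its value on ω with trivial B. -/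
open Matrix Kronecker
open scoped ComplexOrder

noncomputable section

open scoped Classical

/-! Any conditionally unital semi-causal channel can only increase a conditional entropy. The
channel that discards `B` and prepares a fixed state `τ'` on `B'` is such a channel, and it maps
`ω ⊗ τ` to `ω ⊗ τ'` whenever `Tr τ = 1`. Applying it in both directions gives the two
inequalities; the second claim is the case `B' = ℂ¹`, `τ' = 1`. -/

lemma IsDensity.kronecker {ι κ : Type} [Fintype ι] [Fintype κ] {ρ : Matrix ι ι ℂ}
    {σ : Matrix κ κ ℂ} (hρ : IsDensity ρ) (hσ : IsDensity σ) : IsDensity (ρ ⊗ₖ σ) :=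
  ⟨hρ.1.kronecker hσ.1, by rw [trace_kronecker, hρ.2, hσ.2, one_mul]⟩

lemma isDensity_one_fin_one : IsDensity (1 : Mat 1) :=
  ⟨PosSemidef.one, by simp⟩

section PartialTrace

variable {α β : Type}

lemma ptraceA_kronecker [Fintype α] (A : Matrix α α ℂ) (B : Matrix β β ℂ) :
    ptraceA (A ⊗ₖ B) = A.trace • B := by
  ext j j'
  simp [ptraceA, trace, Finset.sum_mul]

lemma ptraceB_kronecker [Fintype β] (A : Matrix α α ℂ) (B : Matrix β β ℂ) :
    ptraceB (A ⊗ₖ B) = B.trace • A := by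
  ext i i'
  simp [ptraceB, trace, Finset.mul_sum, mul_comm]

lemma trace_ptraceB [Fintype α] [Fintype β] (M : Matrix (α × β) (α × β) ℂ) :
    (ptraceB M).trace = M.trace := by
  simp [trace, ptraceB, Fintype.sum_prod_type]

lemma ptraceB_add [Fintype β] (M N : Matrix (α × β) (α × β) ℂ) :
    ptraceB (M + N) = ptraceB M + ptraceB N := by
  ext i i'
  simp [ptraceB, Finset.sum_add_distrib]

lemma ptraceB_smul [Fintype β] (c : ℂ) (M : Matrix (α × β) (α × β) ℂ) :
    ptraceB (c • M) = c • ptraceB M := by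
  ext i i'
  simp [ptraceB, Finset.mul_sum]

lemma posSemidef_choi_ptraceB [Fintype α] [Fintype β] [DecidableEq α] [DecidableEq β] :
    (choi (ptraceB : Matrix (α × β) (α × β) ℂ → Matrix α α ℂ)).PosSemidef := by
  -- `Σ_x |w_x⟩⟨w_x|` with `w_x = Σ_i |i, x⟩ ⊗ |i⟩`
  let C : Matrix β ((α × β) × α) ℂ :=
    Matrix.of fun x P => if P.1.2 = x ∧ P.1.1 = P.2 then 1 else 0
  have hC : choi ptraceB = Cᴴ * C := by
    ext ⟨⟨i, j⟩, m⟩ ⟨⟨k, l⟩, m'⟩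
    simp only [choi, ptraceB, single, mul_apply, conjTranspose_apply, C, of_apply,
      Prod.mk.injEq, apply_ite (star : ℂ → ℂ), star_one, star_zero]
    refine Finset.sum_congr rfl fun x _ => ?_
    split_ifs <;> simp_all
  rw [hC]
  exact posSemidef_conjTranspose_mul_self C

end PartialTrace

lemma trace_lTensorId {α α' β : Type} [Fintype α] [Fintype α'] [Fintype β]
    {M : Matrix α α ℂ → Matrix α' α' ℂ} (hM : ∀ X, (M X).trace = X.trace)
    (X : Matrix (α × β) (α × β) ℂ) : (lTensorId M X).trace = X.trace := by
  calc (lTensorId M X).trace = ∑ j, (M fun k k' => X (k, j) (k', j)).trace := by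
        simp only [trace, lTensorId, diag, Fintype.sum_prod_type]
        exact Finset.sum_comm
    _ = ∑ j, ∑ k, X (k, j) (k, j) := Finset.sum_congr rfl fun j _ => hM _
    _ = X.trace := by
        simp only [trace, diag, Fintype.sum_prod_type]
        exact Finset.sum_comm

lemma lTensorId_isomChannel_one {a b : ℕ} (X : BMat a b) :
    lTensorId (isomChannel (1 : Mat a)) X = X := by
  ext p q
  simp only [lTensorId, isomChannel, conjTranspose_one, Matrix.mul_one]
  exact congrFun₂ (Matrix.one_mul (of fun k k' => X (k, p.2) (k', q.2))) p.1 q.1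

def discardPrepare {α β β' : Type} [Fintype β] (τ' : Matrix β' β' ℂ)
    (X : Matrix (α × β) (α × β) ℂ) : Matrix (α × β') (α × β') ℂ :=
  ptraceB X ⊗ₖ τ'

section DiscardPrepare

variable {α β β' : Type} [Fintype β] (τ' : Matrix β' β' ℂ)

lemma discardPrepare_kronecker (ω : Matrix α α ℂ) {τ : Matrix β β ℂ} (hτ : τ.trace = 1) :
    discardPrepare τ' (ω ⊗ₖ τ) = ω ⊗ₖ τ' := by
  rw [discardPrepare, ptraceB_kronecker, hτ, one_smul]

lemma ptraceA_discardPrepare [Fintype α] (X : Matrix (α × β) (α × β) ℂ) :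
    ptraceA (discardPrepare τ' X) = X.trace • τ' := by
  rw [discardPrepare, ptraceA_kronecker, trace_ptraceB]

lemma isCPTP_discardPrepare [Fintype α] [Fintype β'] [DecidableEq α] [DecidableEq β]
    (hτ' : IsDensity τ') :
    IsCPTP (discardPrepare (α := α) (β := β) τ') := by
  refine ⟨⟨fun X Y => ?_, fun c X => ?_⟩, fun X => ?_, ?_⟩
  · rw [discardPrepare, ptraceB_add, add_kronecker]; rfl
  · rw [discardPrepare, ptraceB_smul, smul_kronecker]; rfl
  · rw [discardPrepare, trace_kronecker, trace_ptraceB, hτ'.2, mul_one]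
  · have hchoi : choi (discardPrepare (α := α) (β := β) τ') =
        (choi ptraceB ⊗ₖ τ').submatrix (Equiv.prodAssoc _ _ _).symm
          (Equiv.prodAssoc _ _ _).symm := rfl
    rw [hchoi, posSemidef_submatrix_equiv]
    exact posSemidef_choi_ptraceB.kronecker hτ'.1

end DiscardPrepare

lemma cusc_discardPrepare {a b b' : ℕ} {τ' : Mat b'} (hτ' : IsDensity τ') :
    CUSC (discardPrepare (α := Fin a) (β := Fin b) τ') := by
  refine ⟨isCPTP_discardPrepare τ' hτ', fun ρ hρ => ⟨τ', hτ', ?_⟩, fun M hM X => ?_⟩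
  · exact discardPrepare_kronecker τ' _ hρ.2
  · rw [ptraceA_discardPrepare, ptraceA_discardPrepare, trace_lTensorId hM.2.1]

lemma condMajor_of_cusc {a b b' : ℕ} {N : BMat a b → BMat a b'} (hN : CUSC N) (ρ : BMat a b) :
    CondMajor (N ρ) ρ :=
  .inl ⟨le_rfl, 1, by simp, N, hN, (lTensorId_isomChannel_one _).symm⟩

namespace CondEntropy

variable (E : CondEntropy)

lemma H_le_H_of_cusc {a b b' : ℕ} {N : BMat a b → BMat a b'} (hN : CUSC N) {ρ : BMat a b}
    (hρ : IsDensity ρ) (hNρ : IsDensity (N ρ)) : E.H ρ ≤ E.H (N ρ) :=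
  E.mono ρ (N ρ) hρ hNρ (condMajor_of_cusc hN ρ)

lemma H_kronecker_le {dA dB dB' : ℕ} {ω : Mat dA} {τ : Mat dB} {τ' : Mat dB'}
    (hω : IsDensity ω) (hτ : IsDensity τ) (hτ' : IsDensity τ') :
    E.H (ω ⊗ₖ τ) ≤ E.H (ω ⊗ₖ τ') := by
  have h := discardPrepare_kronecker τ' ω hτ.2
  rw [← h]
  exact E.H_le_H_of_cusc (cusc_discardPrepare hτ') (hω.kronecker hτ) (h ▸ hω.kronecker hτ')

lemma H_kronecker_eq {dA dB dB' : ℕ} {ω : Mat dA} {τ : Mat dB} {τ' : Mat dB'}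
    (hω : IsDensity ω) (hτ : IsDensity τ) (hτ' : IsDensity τ') :
    E.H (ω ⊗ₖ τ) = E.H (ω ⊗ₖ τ') :=
  (E.H_kronecker_le hω hτ hτ').antisymm (E.H_kronecker_le hω hτ' hτ)

end CondEntropy

/-- conditional entropy reduces to an entropy on product states. -/
theorem condEntropy_product_state (E : CondEntropy) {dA dB dB' : ℕ}
    (ω : Mat dA) (τ : Mat dB) (τ' : Mat dB')
    (hω : IsDensity ω) (hτ : IsDensity τ) (hτ' : IsDensity τ') :
    E.H (ω ⊗ₖ τ) = E.H (ω ⊗ₖ τ') ∧ E.H (ω ⊗ₖ τ) = E.H (ω ⊗ₖ (1 : Mat 1)) :=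
  ⟨E.H_kronecker_eq hω hτ hτ', E.H_kronecker_eq hω hτ isDensity_one_fin_one⟩

end
end

section
/- Every conditionally doubly stochastic channel is conditionally unital and semi-causal. That is, if M : XY → XY' is a bipartite channel of the form M = Σ_j D^(j) ⊗ F^(j), where each D^(j) is the quantum channel on X induced by a doubly stochastic matrix (D^(j)(ρ) = Σ_{a,b} d^(j)_{a|b} ⟨b|ρ|b⟩ |a⟩⟨a| with (d^(j)_{a|b}) doubly stochastic) and each F^(j) : Y → Y' is a completely positive map such that Σ_j F^(j) is a quantum channel, then M ∈ CUSC(XY → XY'). -/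
open Matrix Kronecker
open scoped ComplexOrder

noncomputable section

open scoped Classical

/-! A summand `D ⊗ F` of the channel is completely positive because its Choi matrix is a
reindexed Kronecker product of the Choi matrices of `D` and `F`. Each `D^(j)` is trace preserving,
so tracing out the first factor gives `Tr_A ∘ M = (Σ_j F^(j)) ∘ Tr_A`: this yields trace
preservation, and semi-causality because a channel acting on `A` alone leaves `Tr_A` unchanged.
Each `D^(j)` is also unital, so `M (u ⊗ ρ) = u ⊗ Σ_j F^(j) ρ`. -/

section Channels

variable {α β γ δ : Type}

lemma apply_eq_sum_choi [Fintype α] [DecidableEq α] [Fintype γ]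
    {Φ : Matrix α α ℂ → Matrix γ γ ℂ} (hΦ : IsLinearMap ℂ Φ) (ρ : Matrix α α ℂ) (i i' : γ) :
    Φ ρ i i' = ∑ l, ∑ l', ρ l l' * choi Φ (l, i) (l', i') := by
  let L := IsLinearMap.mk' Φ hΦ
  have hρ : ρ = ∑ l, ∑ l', ρ l l' • single l l' (1 : ℂ) := by
    conv_lhs => rw [ρ.matrix_eq_sum_single]
    simp only [smul_single, smul_eq_mul, mul_one]
  change L ρ i i' = _
  conv_lhs => rw [hρ]
  simp only [map_sum, map_smul, Matrix.sum_apply, Matrix.smul_apply, smul_eq_mul]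
  rfl

theorem IsCP.posSemidef_apply [Fintype α] [DecidableEq α] [Fintype γ]
    {Φ : Matrix α α ℂ → Matrix γ γ ℂ} (hΦ : IsCP Φ) {ρ : Matrix α α ℂ} (hρ : ρ.PosSemidef) :
    (Φ ρ).PosSemidef := by
  -- On `ρ = Σ v vᴴ`, each `Φ (v vᴴ)` is a compression `Wᴴ (choi Φ) W`.
  obtain ⟨n, v, rfl⟩ := Matrix.posSemidef_iff_eq_sum_vecMulVec.mp hρ
  let L := IsLinearMap.mk' Φ hΦ.1
  change (L _).PosSemidef
  rw [map_sum]
  refine posSemidef_sum _ fun t _ => ?_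
  let W : Matrix (α × γ) γ ℂ := Matrix.of fun p i => if p.2 = i then star (v t p.1) else 0
  have hW : L (vecMulVec (v t) (star (v t))) = Wᴴ * choi Φ * W := by
    ext i i'
    change Φ _ i i' = _
    rw [apply_eq_sum_choi hΦ.1, Finset.sum_comm]
    simp [W, Matrix.mul_apply, vecMulVec_apply, Fintype.sum_prod_type, Finset.sum_mul,
      apply_ite (starRingEnd ℂ), mul_assoc, mul_comm (starRingEnd ℂ _)]
  rw [hW]
  exact hΦ.2.conjTranspose_mul_mul_same W

theorem IsCP.sum [Fintype α] [DecidableEq α] [Fintype γ] {ι : Type} [Fintype ι]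
    {Φ : ι → Matrix α α ℂ → Matrix γ γ ℂ} (hΦ : ∀ j, IsCP (Φ j)) : IsCP (fun X => ∑ j, Φ j X) := by
  have hL : (fun X => ∑ j, Φ j X) = ⇑(∑ j, IsLinearMap.mk' (Φ j) (hΦ j).1) := by
    ext X; simp
  refine ⟨hL ▸ LinearMap.isLinear _, ?_⟩
  have hchoi : choi (fun X => ∑ j, Φ j X) = ∑ j, choi (Φ j) := by
    ext P Q; simp [choi, Matrix.sum_apply]
  exact hchoi ▸ posSemidef_sum _ fun j _ => (hΦ j).2

lemma IsLinearMap.rTensorId {Ψ : Matrix β β ℂ → Matrix δ δ ℂ} (hΨ : IsLinearMap ℂ Ψ) :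
    IsLinearMap ℂ (rTensorId Ψ : Matrix (α × β) (α × β) ℂ → _) :=
  ⟨fun X Y => by ext p q; exact congrFun₂ (hΨ.map_add _ _) p.2 q.2,
    fun c X => by ext p q; exact congrFun₂ (hΨ.map_smul c _) p.2 q.2⟩

lemma IsLinearMap.lTensorId {Φ : Matrix α α ℂ → Matrix γ γ ℂ} (hΦ : IsLinearMap ℂ Φ) :
    IsLinearMap ℂ (lTensorId Φ : Matrix (α × β) (α × β) ℂ → _) :=
  ⟨fun X Y => by ext p q; exact congrFun₂ (hΦ.map_add _ _) p.1 q.1,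
    fun c X => by ext p q; exact congrFun₂ (hΦ.map_smul c _) p.1 q.1⟩

lemma rTensorId_kronecker {Ψ : Matrix β β ℂ → Matrix δ δ ℂ} (hΨ : IsLinearMap ℂ Ψ)
    (A : Matrix α α ℂ) (B : Matrix β β ℂ) : rTensorId Ψ (A ⊗ₖ B) = A ⊗ₖ Ψ B := by
  ext p q
  exact congrFun₂ (hΨ.map_smul (A p.1 q.1) B) p.2 q.2

lemma lTensorId_kronecker {Φ : Matrix α α ℂ → Matrix γ γ ℂ} (hΦ : IsLinearMap ℂ Φ)
    (A : Matrix α α ℂ) (B : Matrix β β ℂ) : lTensorId Φ (A ⊗ₖ B) = Φ A ⊗ₖ B := by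
  ext p q
  have hblock : (fun k k' => (A ⊗ₖ B) (k, p.2) (k', q.2)) = B p.2 q.2 • A := by
    ext k k'; simp [mul_comm]
  change Φ (fun k k' => (A ⊗ₖ B) (k, p.2) (k', q.2)) p.1 q.1 = _
  rw [hblock, hΦ.map_smul]
  simp [mul_comm]

theorem IsCP.lTensorId_rTensorId [Fintype α] [DecidableEq α] [Fintype β] [DecidableEq β]
    [Fintype γ] [Fintype δ] {Φ : Matrix α α ℂ → Matrix γ γ ℂ}
    {Ψ : Matrix β β ℂ → Matrix δ δ ℂ} (hΦ : IsCP Φ) (hΨ : IsCP Ψ) :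
    IsCP (fun X => lTensorId Φ (rTensorId Ψ X)) := by
  let e := Equiv.prodProdProdComm α β γ δ
  have hchoi : choi (fun X => lTensorId Φ (rTensorId Ψ X)) =
      (choi Φ ⊗ₖ choi Ψ).submatrix e e := by
    ext P Q
    have hsingle : single P.1 Q.1 (1 : ℂ) = single P.1.1 Q.1.1 1 ⊗ₖ single P.1.2 Q.1.2 1 := by
      rw [single_kronecker_single, mul_one]
    simp only [choi, hsingle, rTensorId_kronecker hΨ.1, lTensorId_kronecker hΦ.1]
    rfl
  have hlin : IsLinearMap ℂ (fun X => lTensorId Φ (rTensorId Ψ X)) :=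
    ⟨fun X Y => by simp only [hΨ.1.rTensorId.map_add, hΦ.1.lTensorId.map_add],
      fun c X => by simp only [hΨ.1.rTensorId.map_smul, hΦ.1.lTensorId.map_smul]⟩
  exact ⟨hlin, hchoi ▸ (hΦ.2.kronecker hΨ.2).submatrix e⟩

lemma ptraceA_sum [Fintype α] {ι : Type} (s : Finset ι) (X : ι → Matrix (α × β) (α × β) ℂ) :
    ptraceA (∑ j ∈ s, X j) = ∑ j ∈ s, ptraceA (X j) := by
  ext i i'; simp [ptraceA, Matrix.sum_apply, Finset.sum_comm (s := s)]

lemma trace_ptraceA [Fintype α] [Fintype β] (X : Matrix (α × β) (α × β) ℂ) :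
    (ptraceA X).trace = X.trace := by
  simp [ptraceA, Matrix.trace, Fintype.sum_prod_type, Finset.sum_comm (γ := α)]

lemma ptraceA_lTensorId [Fintype α] [Fintype γ] {Φ : Matrix α α ℂ → Matrix γ γ ℂ}
    (hΦ : ∀ X, (Φ X).trace = X.trace) (Y : Matrix (α × β) (α × β) ℂ) :
    ptraceA (lTensorId Φ Y) = ptraceA Y := by
  ext i i'; exact hΦ fun k k' => Y (k, i) (k', i')

lemma ptraceA_rTensorId [Fintype α] {Ψ : Matrix β β ℂ → Matrix δ δ ℂ} (hΨ : IsLinearMap ℂ Ψ)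
    (Y : Matrix (α × β) (α × β) ℂ) : ptraceA (rTensorId Ψ Y) = Ψ (ptraceA Y) := by
  let L := IsLinearMap.mk' Ψ hΨ
  have hY : ptraceA Y = ∑ a, (fun k k' => Y (a, k) (a, k') : Matrix β β ℂ) := by
    ext k k'; simp [ptraceA]
  ext i i'
  have h := congrFun₂ (map_sum L (fun a => (fun k k' => Y (a, k) (a, k') : Matrix β β ℂ)) .univ)
    i i'
  rw [Matrix.sum_apply, ← hY] at h
  exact h.symm

lemma ptraceA_sum_lTensorId_rTensorId {ι : Type} [Fintype α] [Fintype γ] [Fintype ι]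
    {Φ : ι → Matrix α α ℂ → Matrix γ γ ℂ} {Ψ : ι → Matrix β β ℂ → Matrix δ δ ℂ}
    (hΦ : ∀ j X, (Φ j X).trace = X.trace) (hΨ : ∀ j, IsLinearMap ℂ (Ψ j))
    (X : Matrix (α × β) (α × β) ℂ) :
    ptraceA (∑ j, lTensorId (Φ j) (rTensorId (Ψ j) X)) = ∑ j, Ψ j (ptraceA X) := by
  simp only [ptraceA_sum, ptraceA_lTensorId (hΦ _), ptraceA_rTensorId (hΨ _)]

end Channels

section DoublyStochastic

variable {m : ℕ} {d : Matrix (Fin m) (Fin m) ℝ}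

theorem isCP_dsChannel (hd : ∀ x y, 0 ≤ d x y) : IsCP (dsChannel d) := by
  refine ⟨⟨fun X Y => ?_, fun c X => ?_⟩, ?_⟩
  · ext x x'; by_cases h : x = x' <;> simp [dsChannel, h, mul_add, Finset.sum_add_distrib]
  · ext x x'; simp [dsChannel, Finset.mul_sum, mul_left_comm]
  · have hchoi : choi (dsChannel d) = diagonal fun p => (d p.2 p.1 : ℂ) := by
      ext ⟨a, c⟩ ⟨a', c'⟩
      by_cases ha : a = a'
      · subst ha; simp [choi, dsChannel, diagonal_apply, single_apply]
      · have hne (y : Fin m) : ¬(a = y ∧ a' = y) := fun h => ha (h.1.trans h.2.symm)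
        simp [choi, dsChannel, ha, hne]
    rw [hchoi]
    exact PosSemidef.diagonal fun p => Complex.zero_le_real.mpr (hd p.2 p.1)

theorem trace_dsChannel (hcol : ∀ y, ∑ x, d x y = 1) (ρ : Mat m) :
    (dsChannel d ρ).trace = ρ.trace := by
  have hcol' (y : Fin m) : ∑ x, (d x y : ℂ) = 1 := by exact_mod_cast hcol y
  simp only [dsChannel, Matrix.trace, diag_apply, of_apply, if_true]
  rw [Finset.sum_comm]
  simp [← Finset.sum_mul, hcol']

theorem dsChannel_uMat (hrow : ∀ x, ∑ y, d x y = 1) : dsChannel d (uMat m) = uMat m := by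
  have hrow' (x : Fin m) : ∑ y, (d x y : ℂ) = 1 := by exact_mod_cast hrow x
  ext x x'
  by_cases h : x = x' <;> simp [dsChannel, uMat, h, ← Finset.sum_mul, hrow']

end DoublyStochastic

/-- conditionally doubly stochastic channels are CUSC. -/
theorem cds_subset_cusc {m b b' k : ℕ}
    (d : Fin k → Matrix (Fin m) (Fin m) ℝ) (hd : ∀ j, IsDoublyStochastic (d j))
    (F : Fin k → (Mat b → Mat b')) (hF : ∀ j, IsCP (F j))
    (hFsum : IsCPTP (fun ρ : Mat b => ∑ j, F j ρ)) :
    CUSC (fun X : BMat m b => ∑ j, lTensorId (dsChannel (d j)) (rTensorId (F j) X)) := by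
  have hptraceA (X : BMat m b) :
      ptraceA (∑ j, lTensorId (dsChannel (d j)) (rTensorId (F j) X)) = ∑ j, F j (ptraceA X) :=
    ptraceA_sum_lTensorId_rTensorId (fun j => trace_dsChannel (hd j).2.2) (fun j => (hF j).1) X
  have hCP : IsCP fun X : BMat m b => ∑ j, lTensorId (dsChannel (d j)) (rTensorId (F j) X) :=
    IsCP.sum fun j => (isCP_dsChannel (hd j).1).lTensorId_rTensorId (hF j)
  refine ⟨⟨hCP.1, fun X => ?_, hCP.2⟩, fun ρ hρ => ⟨∑ j, F j ρ, ⟨?_, ?_⟩, ?_⟩, fun E hE X => ?_⟩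
  · rw [← trace_ptraceA, hptraceA, hFsum.2.1, trace_ptraceA]
  · exact IsCP.posSemidef_apply ⟨hFsum.1, hFsum.2.2⟩ hρ.1
  · exact (hFsum.2.1 ρ).trans hρ.2
  · simp only [rTensorId_kronecker (hF _).1, lTensorId_kronecker (isCP_dsChannel (hd _).1).1,
      dsChannel_uMat (hd _).2.1]
    ext p q
    simp [Matrix.sum_apply, Finset.mul_sum]
  · rw [hptraceA, hptraceA, ptraceA_lTensorId hE.2.1]
end
end

section
/- Let d = dA = dB ≥ 2 and let σ_A ⊗ σ_B be any product density matrix on ℂ^d ⊗ ℂ^d. Then σ_A ⊗ σ_B is game-majorized by the maximally entangled state: R_{T,p}(σ_A ⊗ σ_B) ≤ R_{T,p}(φ⁺) for every game (T,p); moreover, for the game with p = 1 and T the deterministic transition matrix with t_{1|z'} = 1 for all z', one has R_{T,1}(σ_A ⊗ σ_B) ≤ 1/d < 1 = R_{T,1}(φ⁺), so the game-majorization is strict. -/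
open Matrix Kronecker
open scoped ComplexOrder

noncomputable section

open scoped Classical

/-!
Every state scores at most `1` in every game: a Ky Fan norm of a post-measurement state is at most
its trace, and these traces add up to one. The maximally entangled state scores exactly `1`:
however `A` is dephased in a basis `v`, measuring `B` in the conjugate basis leaves `A` in the pure
state `|v_z⟩` with probability `1/d`, and all Ky Fan norms of a pure state agree.

For a product state, the adversary dephases `A` in a basis that is unbiased with respect to an
eigenbasis of `σ_A` (its discrete Fourier transform), which turns `σ_A` into `I/d`. Whatever is then
measured on `B`, the state left on `A` is maximally mixed, so in the game `t_{1|z'} = 1`, which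
rewards only the largest eigenvalue, the player scores `1/d`.
-/

section KyFan

variable {ι : Type} [Fintype ι] [DecidableEq ι]

lemma sumTopK_nonneg (k : ℕ) (f : ι → ℝ) : 0 ≤ sumTopK k f := by
  have h0 : ∅ ∈ Finset.univ.powerset.filter fun s : Finset ι => s.card ≤ k := by simp
  exact le_of_eq_of_le (by simp) (Finset.le_sup' (fun s => ∑ i ∈ s, f i) h0)

lemma sumTopK_le_sum {k : ℕ} {f : ι → ℝ} (hf : 0 ≤ f) : sumTopK k f ≤ ∑ i, f i :=
  Finset.sup'_le _ _ fun s _ =>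
    Finset.sum_le_sum_of_subset_of_nonneg (Finset.subset_univ s) fun i _ _ => hf i

lemma le_sumTopK {k : ℕ} (hk : 1 ≤ k) (f : ι → ℝ) (i : ι) : f i ≤ sumTopK k f := by
  have hi : {i} ∈ Finset.univ.powerset.filter fun s : Finset ι => s.card ≤ k := by simpa using hk
  exact le_of_eq_of_le (by simp) (Finset.le_sup' (fun s => ∑ i ∈ s, f i) hi)

lemma sumTopK_le_mul {k : ℕ} {f : ι → ℝ} {c : ℝ} (hc : 0 ≤ c) (hf : ∀ i, f i ≤ c) :
    sumTopK k f ≤ k * c := by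
  refine Finset.sup'_le _ _ fun s hs => ?_
  calc ∑ i ∈ s, f i ≤ s.card • c := Finset.sum_le_card_nsmul s f c fun i _ => hf i
    _ ≤ k * c := by
      rw [nsmul_eq_mul]
      exact mul_le_mul_of_nonneg_right (by exact_mod_cast (Finset.mem_filter.mp hs).2) hc

lemma kyFan_nonneg (k : ℕ) (X : Matrix ι ι ℂ) : 0 ≤ kyFan k X := by
  unfold kyFan
  split
  · exact sumTopK_nonneg k _
  · exact le_rfl

lemma kyFan_le_re_trace {X : Matrix ι ι ℂ} (hX : X.PosSemidef) (k : ℕ) :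
    kyFan k X ≤ X.trace.re := by
  rw [kyFan, dif_pos hX.isHermitian, hX.isHermitian.trace_eq_sum_eigenvalues]
  simpa using sumTopK_le_sum fun i => hX.eigenvalues_nonneg i

lemma le_kyFan_of_mulVec_eq_smul {X : Matrix ι ι ℂ} (hX : X.IsHermitian) {k : ℕ} (hk : 1 ≤ k)
    {v : ι → ℂ} (hv : v ≠ 0) {μ : ℝ} (hμ : X *ᵥ v = (μ : ℂ) • v) : μ ≤ kyFan k X := by
  have hspec : μ ∈ spectrum ℝ X := by
    rw [spectrum.mem_iff, Matrix.isUnit_iff_isUnit_det, isUnit_iff_ne_zero, not_not,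
      ← Matrix.exists_mulVec_eq_zero_iff]
    refine ⟨v, hv, ?_⟩
    rw [Matrix.sub_mulVec, hμ, Algebra.algebraMap_eq_smul_one, Matrix.smul_mulVec,
      Matrix.one_mulVec, ← Complex.coe_smul, sub_self]
  obtain ⟨i, rfl⟩ := hX.spectrum_real_eq_range_eigenvalues ▸ hspec
  rw [kyFan, dif_pos hX]
  exact le_sumTopK hk _ i

lemma kyFan_smul_one_le {α : ℝ} (hα : 0 ≤ α) (k : ℕ) :
    kyFan k ((α : ℂ) • (1 : Matrix ι ι ℂ)) ≤ k * α := by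
  have hH : ((α : ℂ) • (1 : Matrix ι ι ℂ)).IsHermitian := by
    simp [Matrix.IsHermitian, Matrix.conjTranspose_smul]
  rw [kyFan, dif_pos hH]
  refine sumTopK_le_mul hα fun i => le_of_eq ?_
  rw [hH.eigenvalues_eq, Matrix.smul_mulVec, Matrix.one_mulVec, dotProduct_smul, dotProduct_comm,
    ← EuclideanSpace.inner_eq_star_dotProduct, inner_self_eq_norm_sq_to_K,
    hH.eigenvectorBasis.orthonormal.1 i]
  simp

end KyFan

section RankOne

variable {n : ℕ}

lemma projv_eq_vecMulVec (v : Fin n → ℂ) : projv v = vecMulVec v (star v) := rfl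

lemma projv_posSemidef (v : Fin n → ℂ) : (projv v).PosSemidef :=
  posSemidef_vecMulVec_self_star v

lemma trace_projv (v : Fin n → ℂ) : (projv v).trace = star v ⬝ᵥ v := by
  simp [Matrix.trace, projv, dotProduct, mul_comm]

lemma projv_mulVec (v w : Fin n → ℂ) : projv v *ᵥ w = (star v ⬝ᵥ w) • v := by
  rw [projv_eq_vecMulVec, vecMulVec_mulVec, op_smul_eq_smul]

lemma projv_mul_mul_projv (v : Fin n → ℂ) (A : Mat n) :
    projv v * A * projv v = (star v ⬝ᵥ A *ᵥ v) • projv v := by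
  rw [projv_eq_vecMulVec, vecMulVec_mul, vecMulVec_mul_vecMulVec, ← Matrix.dotProduct_mulVec,
    vecMulVec_smul]

lemma star_dotProduct_projv_mulVec (v w : Fin n → ℂ) :
    star w ⬝ᵥ projv v *ᵥ w = (star w ⬝ᵥ v) * (star v ⬝ᵥ w) := by
  rw [projv_mulVec, dotProduct_smul, smul_eq_mul, mul_comm]

lemma projv_mul_self {v : Fin n → ℂ} (hv : star v ⬝ᵥ v = 1) : projv v * projv v = projv v := by
  simpa [hv] using projv_mul_mul_projv v 1

lemma kyFan_smul_projv {w : Fin n → ℂ} (hw : star w ⬝ᵥ w = 1) {c : ℝ} (hc : 0 ≤ c) {k : ℕ}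
    (hk : 1 ≤ k) : kyFan k ((c : ℂ) • projv w) = c := by
  have hpsd : ((c : ℂ) • projv w).PosSemidef :=
    (projv_posSemidef w).smul (by exact_mod_cast hc)
  apply le_antisymm
  · simpa [Matrix.trace_smul, trace_projv, hw] using kyFan_le_re_trace hpsd k
  · have hw0 : w ≠ 0 := by
      rintro rfl
      simp at hw
    refine le_kyFan_of_mulVec_eq_smul hpsd.isHermitian hk hw0 ?_
    rw [Matrix.smul_mulVec, projv_mulVec, hw, one_smul]

lemma trace_mul_projv (B : Mat n) (u : Fin n → ℂ) :
    (B * projv u).trace = star u ⬝ᵥ B *ᵥ u := by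
  simp only [Matrix.trace, Matrix.diag, Matrix.mul_apply, projv, dotProduct, Matrix.mulVec,
    Finset.mul_sum, Pi.star_apply]
  exact Finset.sum_congr rfl fun _ _ => Finset.sum_congr rfl fun _ _ => by ring

lemma isRankOneMeas_iff {u : Fin n → Fin n → ℂ} :
    IsRankOneMeas u ↔ Matrix.of (fun i z => u z i) ∈ Matrix.unitaryGroup (Fin n) ℂ := by
  rw [Matrix.mem_unitaryGroup_iff', ← Matrix.ext_iff]
  simp [IsRankOneMeas, Matrix.mul_apply, Matrix.one_apply]

namespace IsRankOneMeas

variable {u : Fin n → Fin n → ℂ}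

lemma star_dotProduct_self (hu : IsRankOneMeas u) (z : Fin n) : star (u z) ⬝ᵥ u z = 1 := by
  simpa [dotProduct] using hu z z

lemma sum_projv (hu : IsRankOneMeas u) : ∑ z, projv (u z) = 1 := by
  have h := Matrix.mem_unitaryGroup_iff.mp (isRankOneMeas_iff.mp hu)
  ext i j
  simpa [projv, Matrix.sum_apply, Matrix.mul_apply] using congrFun (congrFun h i) j

lemma conj (hu : IsRankOneMeas u) : IsRankOneMeas fun z => star (u z) := by
  rw [isRankOneMeas_iff, Matrix.mem_unitaryGroup_iff']
  have h := congrArg Matrix.transpose (Matrix.mem_unitaryGroup_iff'.mp (isRankOneMeas_iff.mp hu))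
  ext i j
  simpa [Matrix.transpose_mul, Matrix.mul_apply, Matrix.one_apply, mul_comm, eq_comm] using
    congrFun (congrFun h i) j

lemma sum_star_dotProduct_mulVec (hu : IsRankOneMeas u) (B : Mat n) :
    ∑ z, star (u z) ⬝ᵥ B *ᵥ u z = B.trace := by
  simp only [← trace_mul_projv, ← Matrix.trace_sum, ← Matrix.mul_sum, hu.sum_projv, Matrix.mul_one]

end IsRankOneMeas

lemma isRankOneMeas_single : IsRankOneMeas fun z : Fin n => Pi.single z 1 := by
  intro z z'
  by_cases h : z = z'
  · simp [h, Pi.single_apply]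
  · simp [Pi.single_apply, h, Ne.symm h]

end RankOne

section Kronecker

variable {l m n p ι : Type}

lemma kronecker_sum (A : Matrix l m ℂ) (s : Finset ι) (B : ι → Matrix n p ℂ) :
    A ⊗ₖ (∑ i ∈ s, B i) = ∑ i ∈ s, A ⊗ₖ B i := by
  ext
  simp [Matrix.sum_apply, Finset.mul_sum]

lemma sum_kronecker (s : Finset ι) (A : ι → Matrix l m ℂ) (B : Matrix n p ℂ) :
    (∑ i ∈ s, A i) ⊗ₖ B = ∑ i ∈ s, A i ⊗ₖ B := by
  ext
  simp [Matrix.sum_apply, Finset.sum_mul]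

end Kronecker

section PartialTrace

variable {a b : ℕ}

lemma ptraceB_apply (M : BMat a b) (i i' : Fin a) : ptraceB M i i' = ∑ j, M (i, j) (i', j) := rfl

lemma one_kronecker_mul_apply (Q : Mat b) (M : BMat a b) (i : Fin a) (j : Fin b)
    (q : Fin a × Fin b) : (((1 : Mat a) ⊗ₖ Q) * M) (i, j) q = ∑ k, Q j k * M (i, k) q := by
  simp [Matrix.mul_apply, Fintype.sum_prod_type, Matrix.one_apply]

lemma mul_one_kronecker_apply (Q : Mat b) (M : BMat a b) (p : Fin a × Fin b) (i : Fin a)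
    (j : Fin b) : (M * ((1 : Mat a) ⊗ₖ Q)) p (i, j) = ∑ k, M p (i, k) * Q k j := by
  simp [Matrix.mul_apply, Fintype.sum_prod_type, Matrix.one_apply, mul_ite, ite_mul]

lemma kronecker_one_mul_apply (Q : Mat a) (M : BMat a b) (i : Fin a) (j : Fin b)
    (q : Fin a × Fin b) : ((Q ⊗ₖ (1 : Mat b)) * M) (i, j) q = ∑ k, Q i k * M (k, j) q := by
  simp [Matrix.mul_apply, Fintype.sum_prod_type, Matrix.one_apply, mul_ite]

lemma mul_kronecker_one_apply (Q : Mat a) (M : BMat a b) (p : Fin a × Fin b) (i : Fin a)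
    (j : Fin b) : (M * (Q ⊗ₖ (1 : Mat b))) p (i, j) = ∑ k, M p (k, j) * Q k i := by
  simp [Matrix.mul_apply, Fintype.sum_prod_type, Matrix.one_apply, mul_ite]

lemma trace_ptraceB_s12 (M : BMat a b) : (ptraceB M).trace = M.trace := by
  simp [Matrix.trace, ptraceB, Fintype.sum_prod_type]

lemma ptraceB_sum {ι : Type} (s : Finset ι) (M : ι → BMat a b) :
    ptraceB (∑ l ∈ s, M l) = ∑ l ∈ s, ptraceB (M l) := by
  ext i i'
  simp only [ptraceB, Matrix.sum_apply]
  exact Finset.sum_comm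

lemma ptraceB_kronecker_s12 (A : Mat a) (B : Mat b) : ptraceB (A ⊗ₖ B) = B.trace • A := by
  ext i i'
  simp [ptraceB, Matrix.trace, Finset.mul_sum, mul_comm]

lemma ptraceB_eq_sum_conj (M : BMat a b) :
    ptraceB M = ∑ j, (Matrix.of fun (p : Fin a × Fin b) (i : Fin a) =>
      if p = (i, j) then (1 : ℂ) else 0)ᴴ * M *
      Matrix.of fun (p : Fin a × Fin b) (i : Fin a) => if p = (i, j) then (1 : ℂ) else 0 := by
  ext i i'
  simp [ptraceB, Matrix.sum_apply, Matrix.mul_apply, Matrix.conjTranspose_apply]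

lemma ptraceB_posSemidef {M : BMat a b} (hM : M.PosSemidef) : (ptraceB M).PosSemidef := by
  rw [ptraceB_eq_sum_conj]
  exact Matrix.posSemidef_sum _ fun j _ => hM.conjTranspose_mul_mul_same _

lemma ptraceB_one_kronecker_mul (Q : Mat b) (M : BMat a b) :
    ptraceB (((1 : Mat a) ⊗ₖ Q) * M) = ptraceB (M * ((1 : Mat a) ⊗ₖ Q)) := by
  ext i i'
  simp only [ptraceB_apply, one_kronecker_mul_apply, mul_one_kronecker_apply]
  rw [Finset.sum_comm]
  simp only [mul_comm]

lemma ptraceB_kronecker_one_mul_mul (Q R : Mat a) (M : BMat a b) :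
    ptraceB ((Q ⊗ₖ (1 : Mat b)) * M * (R ⊗ₖ (1 : Mat b))) = Q * ptraceB M * R := by
  ext i i'
  rw [ptraceB_apply, Matrix.mul_apply]
  simp_rw [mul_kronecker_one_apply, kronecker_one_mul_apply, Matrix.mul_apply, ptraceB_apply]
  rw [Finset.sum_comm]
  refine Finset.sum_congr rfl fun k' _ => ?_
  simp only [Finset.sum_mul, Finset.mul_sum]
  rw [Finset.sum_comm]

end PartialTrace

section Measurement

variable {a b : ℕ}

/-- The unnormalised state left on `A` when `B` is measured and `|w⟩` is found. -/
def condStateA (ρ : BMat a b) (w : Fin b → ℂ) : Mat a :=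
  ptraceB (((1 : Mat a) ⊗ₖ projv w) * ρ * ((1 : Mat a) ⊗ₖ projv w))

def pinchA (v : Fin a → Fin a → ℂ) (ρ : BMat a b) : BMat a b :=
  ∑ j, (projv (v j) ⊗ₖ (1 : Mat b)) * ρ * (projv (v j) ⊗ₖ (1 : Mat b))

lemma condStateA_eq_ptraceB_mul {w : Fin b → ℂ} (hw : star w ⬝ᵥ w = 1) (ρ : BMat a b) :
    condStateA ρ w = ptraceB (ρ * ((1 : Mat a) ⊗ₖ projv w)) := by
  rw [condStateA, Matrix.mul_assoc, ptraceB_one_kronecker_mul, Matrix.mul_assoc,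
    ← Matrix.mul_kronecker_mul, Matrix.one_mul, projv_mul_self hw]

lemma condStateA_apply {w : Fin b → ℂ} (hw : star w ⬝ᵥ w = 1) (ρ : BMat a b) (i i' : Fin a) :
    condStateA ρ w i i' = ∑ j, ∑ k, ρ (i, j) (i', k) * (w k * star (w j)) := by
  rw [condStateA_eq_ptraceB_mul hw, ptraceB_apply]
  simp only [mul_one_kronecker_apply, projv]

lemma condStateA_posSemidef {ρ : BMat a b} (hρ : ρ.PosSemidef) (w : Fin b → ℂ) :
    (condStateA ρ w).PosSemidef := by
  refine ptraceB_posSemidef ?_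
  simpa [Matrix.conjTranspose_kronecker, (projv_posSemidef w).isHermitian.eq] using
    hρ.mul_mul_conjTranspose_same ((1 : Mat a) ⊗ₖ projv w)

lemma sum_trace_condStateA {u : Fin b → Fin b → ℂ} (hu : IsRankOneMeas u) (ρ : BMat a b) :
    ∑ z, (condStateA ρ (u z)).trace = ρ.trace := by
  simp only [condStateA_eq_ptraceB_mul (hu.star_dotProduct_self _), trace_ptraceB_s12,
    ← Matrix.trace_sum, ← Matrix.mul_sum]
  rw [← kronecker_sum, hu.sum_projv, Matrix.one_kronecker_one, Matrix.mul_one]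

lemma condStateA_kronecker {w : Fin b → ℂ} (hw : star w ⬝ᵥ w = 1) (A : Mat a) (B : Mat b) :
    condStateA (A ⊗ₖ B) w = (star w ⬝ᵥ B *ᵥ w) • A := by
  rw [condStateA, ← Matrix.mul_kronecker_mul, ← Matrix.mul_kronecker_mul, Matrix.one_mul,
    Matrix.mul_one, projv_mul_mul_projv, ptraceB_kronecker_s12, Matrix.trace_smul, trace_projv, hw,
    smul_eq_mul, mul_one]

lemma condStateA_sum {ι : Type} (s : Finset ι) (ρ : ι → BMat a b) (w : Fin b → ℂ) :
    condStateA (∑ l ∈ s, ρ l) w = ∑ l ∈ s, condStateA (ρ l) w := by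
  rw [condStateA, Matrix.mul_sum, Matrix.sum_mul, ptraceB_sum]
  rfl

lemma condStateA_kronecker_one_mul_mul (Q R : Mat a) (ρ : BMat a b) (w : Fin b → ℂ) :
    condStateA ((Q ⊗ₖ (1 : Mat b)) * ρ * (R ⊗ₖ (1 : Mat b))) w = Q * condStateA ρ w * R := by
  have hcomm : ∀ S : Mat a, ((1 : Mat a) ⊗ₖ projv w) * (S ⊗ₖ (1 : Mat b)) =
      (S ⊗ₖ (1 : Mat b)) * ((1 : Mat a) ⊗ₖ projv w) := by
    intro S
    simp only [← Matrix.mul_kronecker_mul, Matrix.one_mul, Matrix.mul_one]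
  rw [condStateA, condStateA, ← ptraceB_kronecker_one_mul_mul]
  simp only [← Matrix.mul_assoc, hcomm]
  simp only [Matrix.mul_assoc, hcomm]

lemma condStateA_pinchA (v : Fin a → Fin a → ℂ) (ρ : BMat a b) (w : Fin b → ℂ) :
    condStateA (pinchA v ρ) w = ∑ j, projv (v j) * condStateA ρ w * projv (v j) := by
  simp only [pinchA, condStateA_sum, condStateA_kronecker_one_mul_mul]

end Measurement

section GameValue

variable {a b c : ℕ}

/-- The payoff of the strategy "measure `B` in the basis `u`, announce `f z` on outcome `z`". -/
def strategyValue (T : Matrix (Fin a) (Fin c) ℝ) (ρ : BMat a b) (u : Fin b → Fin b → ℂ)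
    (f : Fin b → Fin c) : ℝ :=
  ∑ z, ∑ w, T w (f z) * kyFan (w.1 + 1) (condStateA ρ (u z))

lemma R0_eq_iSup_strategyValue (T : Matrix (Fin a) (Fin c) ℝ) (ρ : BMat a b) :
    R0 T ρ = ⨆ u : {u : Fin b → Fin b → ℂ // IsRankOneMeas u}, ⨆ f : Fin b → Fin c,
      strategyValue T ρ u.1 f := rfl

lemma Rgame_eq (T : Matrix (Fin a) (Fin c) ℝ) (p : ℝ) (ρ : BMat a b) :
    Rgame T p ρ = p * (⨅ v : {v : Fin a → Fin a → ℂ // IsRankOneMeas v}, R0 T (pinchA v.1 ρ)) +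
      (1 - p) * R0 T ρ := rfl

variable {T : Matrix (Fin a) (Fin c) ℝ}

lemma strategyValue_nonneg (hT : ∀ w z, 0 ≤ T w z) (ρ : BMat a b) (u : Fin b → Fin b → ℂ)
    (f : Fin b → Fin c) : 0 ≤ strategyValue T ρ u f :=
  Finset.sum_nonneg fun _ _ => Finset.sum_nonneg fun _ _ =>
    mul_nonneg (hT _ _) (kyFan_nonneg _ _)

/-- Each outcome contributes at most the weight of its post-measurement state. -/
lemma strategyValue_le_one (hT : ColStochastic T) {ρ : BMat a b} (hρ : IsDensity ρ)
    {u : Fin b → Fin b → ℂ} (hu : IsRankOneMeas u) (f : Fin b → Fin c) :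
    strategyValue T ρ u f ≤ 1 :=
  calc strategyValue T ρ u f
      ≤ ∑ z, ∑ w, T w (f z) * (condStateA ρ (u z)).trace.re :=
        Finset.sum_le_sum fun _ _ => Finset.sum_le_sum fun _ _ => mul_le_mul_of_nonneg_left
          (kyFan_le_re_trace (condStateA_posSemidef hρ.1 _) _) (hT.1 _ _)
    _ = ∑ z, (condStateA ρ (u z)).trace.re := by simp only [← Finset.sum_mul, hT.2, one_mul]
    _ = 1 := by rw [← Complex.re_sum, sum_trace_condStateA hu, hρ.2, Complex.one_re]

lemma R0_nonneg (hT : ∀ w z, 0 ≤ T w z) (ρ : BMat a b) : 0 ≤ R0 T ρ :=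
  Real.iSup_nonneg fun _ => Real.iSup_nonneg fun _ => strategyValue_nonneg hT _ _ _

lemma R0_le_one (hT : ColStochastic T) {ρ : BMat a b} (hρ : IsDensity ρ) : R0 T ρ ≤ 1 :=
  Real.iSup_le (fun u => Real.iSup_le (fun _ => strategyValue_le_one hT hρ u.2 _) zero_le_one)
    zero_le_one

lemma strategyValue_le_R0 (hT : ColStochastic T) {ρ : BMat a b} (hρ : IsDensity ρ)
    {u : Fin b → Fin b → ℂ} (hu : IsRankOneMeas u) (f : Fin b → Fin c) :
    strategyValue T ρ u f ≤ R0 T ρ := by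
  have hinner : BddAbove (Set.range (strategyValue T ρ u)) :=
    ⟨1, by rintro _ ⟨f, rfl⟩; exact strategyValue_le_one hT hρ hu f⟩
  have houter : BddAbove (Set.range fun u : {u : Fin b → Fin b → ℂ // IsRankOneMeas u} =>
      ⨆ f, strategyValue T ρ u.1 f) :=
    ⟨1, by rintro _ ⟨u, rfl⟩; exact Real.iSup_le (strategyValue_le_one hT hρ u.2) zero_le_one⟩
  rw [R0_eq_iSup_strategyValue]
  exact (le_ciSup hinner f).trans (le_ciSup houter ⟨u, hu⟩)

lemma R0_eq_one_of_condStateA_eq (hb : 0 < b) (hc : 0 < c) (hT : ColStochastic T)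
    {ρ : BMat a b} (hρ : IsDensity ρ) {u : Fin b → Fin b → ℂ} (hu : IsRankOneMeas u)
    {w : Fin b → Fin a → ℂ} (hw : ∀ z, star (w z) ⬝ᵥ w z = 1)
    (h : ∀ z, condStateA ρ (u z) = (((b : ℝ)⁻¹ : ℝ) : ℂ) • projv (w z)) : R0 T ρ = 1 := by
  have hkyFan : ∀ z (w : Fin a), kyFan (w.1 + 1) (condStateA ρ (u z)) = (b : ℝ)⁻¹ := by
    intro z _
    rw [h]
    exact kyFan_smul_projv (hw z) (by positivity : (0 : ℝ) ≤ (b : ℝ)⁻¹) (Nat.le_add_left 1 _)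
  refine le_antisymm (R0_le_one hT hρ) ?_
  calc (1 : ℝ) = strategyValue T ρ u fun _ => ⟨0, hc⟩ := by
        simp only [strategyValue, hkyFan, ← Finset.sum_mul, hT.2, one_mul]
        simp [hb.ne']
    _ ≤ R0 T ρ := strategyValue_le_R0 hT hρ hu _

lemma isDensity_pinchA {v : Fin a → Fin a → ℂ} (hv : IsRankOneMeas v) {ρ : BMat a b}
    (hρ : IsDensity ρ) : IsDensity (pinchA v ρ) := by
  refine ⟨Matrix.posSemidef_sum _ fun j _ => ?_, ?_⟩
  · simpa [Matrix.conjTranspose_kronecker, (projv_posSemidef (v j)).isHermitian.eq] using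
      hρ.1.mul_mul_conjTranspose_same (projv (v j) ⊗ₖ (1 : Mat b))
  · simp_rw [pinchA, Matrix.trace_sum, Matrix.trace_mul_cycle _ ρ, ← Matrix.mul_kronecker_mul,
      projv_mul_self (hv.star_dotProduct_self _), Matrix.one_mul, ← Matrix.trace_sum,
      ← Finset.sum_mul, ← sum_kronecker, hv.sum_projv, Matrix.one_kronecker_one, Matrix.one_mul]
    exact hρ.2

lemma iInf_R0_pinchA_le (hT : ∀ w z, 0 ≤ T w z) {v : Fin a → Fin a → ℂ} (hv : IsRankOneMeas v)
    (ρ : BMat a b) :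
    (⨅ v' : {v' : Fin a → Fin a → ℂ // IsRankOneMeas v'}, R0 T (pinchA v'.1 ρ)) ≤
      R0 T (pinchA v ρ) := by
  have hbdd : BddBelow (Set.range fun v' : {v' : Fin a → Fin a → ℂ // IsRankOneMeas v'} =>
      R0 T (pinchA v'.1 ρ)) :=
    ⟨0, by rintro _ ⟨v', rfl⟩; exact R0_nonneg hT _⟩
  exact ciInf_le hbdd ⟨v, hv⟩

lemma Rgame_le_one (hT : ColStochastic T) {ρ : BMat a b} (hρ : IsDensity ρ) {p : ℝ}
    (hp0 : 0 ≤ p) (hp1 : p ≤ 1) : Rgame T p ρ ≤ 1 := by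
  have hinf := (iInf_R0_pinchA_le hT.1 isRankOneMeas_single ρ).trans
    (R0_le_one hT (isDensity_pinchA isRankOneMeas_single hρ))
  rw [Rgame_eq]
  nlinarith [R0_le_one hT hρ]

end GameValue

section MaxEnt

variable {d c : ℕ}

lemma maxEnt_eq_smul_vecMulVec (d : ℕ) :
    maxEnt d = (((d : ℝ)⁻¹ : ℝ) : ℂ) •
      vecMulVec (fun p : Fin d × Fin d => if p.1 = p.2 then 1 else 0)
        (star fun p : Fin d × Fin d => if p.1 = p.2 then 1 else 0) := by
  ext p q
  by_cases hp : p.1 = p.2 <;> by_cases hq : q.1 = q.2 <;> simp [maxEnt, vecMulVec_apply, hp, hq]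

lemma isDensity_maxEnt (hd : 0 < d) : IsDensity (maxEnt d) := by
  rw [maxEnt_eq_smul_vecMulVec]
  refine ⟨(posSemidef_vecMulVec_self_star _).smul (by positivity), ?_⟩
  simp [Matrix.trace, vecMulVec_apply, Fintype.sum_prod_type, hd.ne']

lemma condStateA_maxEnt {w : Fin d → ℂ} (hw : star w ⬝ᵥ w = 1) :
    condStateA (maxEnt d) w = (((d : ℝ)⁻¹ : ℝ) : ℂ) • projv (star w) := by
  ext i i'
  rw [condStateA_apply hw]
  simp [maxEnt, projv, ite_and, mul_comm]

lemma condStateA_pinchA_maxEnt {v : Fin d → Fin d → ℂ} (hv : IsRankOneMeas v) (z : Fin d) :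
    condStateA (pinchA v (maxEnt d)) (star (v z)) = (((d : ℝ)⁻¹ : ℝ) : ℂ) • projv (v z) := by
  have horth : ∀ j, star (v j) ⬝ᵥ projv (v z) *ᵥ v j = if j = z then 1 else 0 := by
    intro j
    rw [star_dotProduct_projv_mulVec]
    by_cases hj : j = z
    · simp [hj, hv.star_dotProduct_self]
    · have h1 : star (v j) ⬝ᵥ v z = 0 := by simpa [hj, dotProduct] using hv j z
      rw [if_neg hj, h1, zero_mul]
  rw [condStateA_pinchA, condStateA_maxEnt (hv.conj.star_dotProduct_self z), star_star]
  simp only [Matrix.mul_smul, Matrix.smul_mul, projv_mul_mul_projv, horth, ite_smul, one_smul,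
    zero_smul, ← Finset.smul_sum, Finset.sum_ite_eq', Finset.mem_univ, if_true]

variable {T : Matrix (Fin d) (Fin c) ℝ}

lemma R0_maxEnt (hd : 0 < d) (hc : 0 < c) (hT : ColStochastic T) : R0 T (maxEnt d) = 1 :=
  R0_eq_one_of_condStateA_eq hd hc hT (isDensity_maxEnt hd) isRankOneMeas_single
    isRankOneMeas_single.conj.star_dotProduct_self fun z =>
      condStateA_maxEnt (isRankOneMeas_single.star_dotProduct_self z)

lemma R0_pinchA_maxEnt (hd : 0 < d) (hc : 0 < c) (hT : ColStochastic T)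
    {v : Fin d → Fin d → ℂ} (hv : IsRankOneMeas v) : R0 T (pinchA v (maxEnt d)) = 1 :=
  R0_eq_one_of_condStateA_eq hd hc hT (isDensity_pinchA hv (isDensity_maxEnt hd)) hv.conj
    hv.star_dotProduct_self (condStateA_pinchA_maxEnt hv)

lemma Rgame_maxEnt (hd : 0 < d) (hc : 0 < c) (hT : ColStochastic T) (p : ℝ) :
    Rgame T p (maxEnt d) = 1 := by
  have : Nonempty {v : Fin d → Fin d → ℂ // IsRankOneMeas v} := ⟨⟨_, isRankOneMeas_single⟩⟩
  rw [Rgame_eq, iInf_congr fun v => R0_pinchA_maxEnt hd hc hT v.2, ciInf_const,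
    R0_maxEnt hd hc hT]
  ring

end MaxEnt

section Fourier

variable {n : ℕ}

def dftBasis (n : ℕ) (j k : Fin n) : ℂ :=
  (((Real.sqrt n)⁻¹ : ℝ) : ℂ) * Complex.exp (2 * Real.pi * Complex.I / n) ^ (j.1 * k.1)

lemma star_dftBasis_mul (hn : 0 < n) (j j' k : Fin n) :
    star (dftBasis n j k) * dftBasis n j' k = (n : ℂ)⁻¹ *
      ((Complex.exp (2 * Real.pi * Complex.I / n))⁻¹ ^ j.1 *
        Complex.exp (2 * Real.pi * Complex.I / n) ^ j'.1) ^ k.1 := by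
  simp only [dftBasis]
  set ζ := Complex.exp (2 * Real.pi * Complex.I / n)
  have hζ : star ζ = ζ⁻¹ :=
    (Complex.inv_eq_conj ((Complex.isPrimitiveRoot_exp n hn.ne').norm'_eq_one hn.ne')).symm
  have hsqrt : (((Real.sqrt n)⁻¹ : ℝ) : ℂ) * (((Real.sqrt n)⁻¹ : ℝ) : ℂ) = (n : ℂ)⁻¹ := by
    rw [← Complex.ofReal_mul, ← mul_inv, Real.mul_self_sqrt (Nat.cast_nonneg n)]
    push_cast
    rfl
  simp only [star_mul', star_pow, hζ, Complex.star_def.symm ▸ Complex.conj_ofReal _]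
  rw [mul_pow, ← pow_mul, ← pow_mul]
  linear_combination (ζ⁻¹ ^ (j.1 * k.1) * ζ ^ (j'.1 * k.1)) * hsqrt

lemma isRankOneMeas_dftBasis (hn : 0 < n) : IsRankOneMeas (dftBasis n) := by
  intro j j'
  set ζ := Complex.exp (2 * Real.pi * Complex.I / n)
  have hζ0 : ζ ≠ 0 := Complex.exp_ne_zero _
  have hprim := Complex.isPrimitiveRoot_exp n hn.ne'
  have hξn : (ζ⁻¹ ^ j.1 * ζ ^ j'.1) ^ n = 1 := by
    rw [mul_pow, ← pow_mul, ← pow_mul, mul_comm j.1, mul_comm j'.1, pow_mul, pow_mul, inv_pow,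
      hprim.pow_eq_one]
    simp
  simp only [star_dftBasis_mul hn, ← Finset.mul_sum]
  rw [Fin.sum_univ_eq_sum_range (fun k => (ζ⁻¹ ^ j.1 * ζ ^ j'.1) ^ k)]
  by_cases hjj : j = j'
  · simp [hjj, hζ0, hn.ne']
  · have hξ : ζ⁻¹ ^ j.1 * ζ ^ j'.1 ≠ 1 := by
      rw [inv_pow, Ne, inv_mul_eq_one₀ (pow_ne_zero _ hζ0)]
      exact fun h => hjj (Fin.ext (hprim.pow_inj j.2 j'.2 h))
    rw [geom_sum_eq hξ, hξn, sub_self, zero_div, mul_zero, if_neg hjj]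

lemma star_dftBasis_mul_self (hn : 0 < n) (j k : Fin n) :
    star (dftBasis n j k) * dftBasis n j k = (n : ℂ)⁻¹ := by
  rw [star_dftBasis_mul hn, inv_pow, inv_mul_cancel₀ (pow_ne_zero _ (Complex.exp_ne_zero _)),
    one_pow, mul_one]

end Fourier

section ProductState

/-- Rotate an eigenbasis of `A` by the discrete Fourier transform. -/
lemma exists_isRankOneMeas_star_dotProduct_mulVec_eq {n : ℕ} (hn : 0 < n) {A : Mat n}
    (hA : A.IsHermitian) :
    ∃ v : Fin n → Fin n → ℂ, IsRankOneMeas v ∧ ∀ j, star (v j) ⬝ᵥ A *ᵥ v j = A.trace / n := by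
  set W : Mat n := (hA.eigenvectorUnitary : Mat n)
  refine ⟨fun j => W *ᵥ dftBasis n j, ?_, fun j => ?_⟩
  · have hW : Matrix.of (fun i z => (W *ᵥ dftBasis n z) i) =
        W * Matrix.of fun k z => dftBasis n z k := by
      ext
      simp [Matrix.mul_apply, Matrix.mulVec, dotProduct]
    rw [isRankOneMeas_iff, hW]
    exact Submonoid.mul_mem _ hA.eigenvectorUnitary.2
      (isRankOneMeas_iff.mp (isRankOneMeas_dftBasis hn))
  · have hdiag : star W * A * W = diagonal (RCLike.ofReal ∘ hA.eigenvalues) := by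
      simpa [Unitary.conjStarAlgAut_apply] using hA.conjStarAlgAut_star_eigenvectorUnitary
    calc star (W *ᵥ dftBasis n j) ⬝ᵥ A *ᵥ (W *ᵥ dftBasis n j)
        = star (dftBasis n j) ⬝ᵥ (star W * A * W) *ᵥ dftBasis n j := by
          simp only [Matrix.star_mulVec, Matrix.dotProduct_mulVec, Matrix.vecMul_vecMul,
            Matrix.mulVec_mulVec, Matrix.mul_assoc, Matrix.star_eq_conjTranspose]
      _ = ∑ m, (hA.eigenvalues m : ℂ) * (star (dftBasis n j m) * dftBasis n j m) := by
          rw [hdiag]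
          simp only [dotProduct, Matrix.mulVec_diagonal, Pi.star_apply, Function.comp_apply]
          exact Finset.sum_congr rfl fun _ _ => mul_left_comm _ _ _
      _ = A.trace / n := by
          simp only [star_dftBasis_mul_self hn, ← Finset.sum_mul, hA.trace_eq_sum_eigenvalues,
            div_eq_mul_inv]
          rfl

lemma pinchA_kronecker {a b : ℕ} {v : Fin a → Fin a → ℂ} (hv : IsRankOneMeas v) {A : Mat a}
    {γ : ℂ} (hA : ∀ j, star (v j) ⬝ᵥ A *ᵥ v j = γ) (B : Mat b) :
    pinchA v (A ⊗ₖ B) = (γ • (1 : Mat a)) ⊗ₖ B := by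
  simp only [pinchA, ← Matrix.mul_kronecker_mul, Matrix.one_mul, Matrix.mul_one,
    projv_mul_mul_projv, hA, ← sum_kronecker, ← Finset.smul_sum, hv.sum_projv]

variable {a b c : ℕ} {T : Matrix (Fin a) (Fin c) ℝ}

lemma colStochastic_of_eq_ite (ha : 0 < a) (hT : ∀ w z, T w z = if w.1 = 0 then 1 else 0) :
    ColStochastic T := by
  refine ⟨fun w z => by rw [hT]; split <;> norm_num, fun z => ?_⟩
  simp only [hT]
  rw [Finset.sum_eq_single ⟨0, ha⟩ (fun w _ hw => if_neg fun h => hw (Fin.ext h)) (by simp)]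
  rfl

lemma strategyValue_of_eq_ite (ha : 0 < a) (hT : ∀ w z, T w z = if w.1 = 0 then 1 else 0)
    (ρ : BMat a b) (u : Fin b → Fin b → ℂ) (f : Fin b → Fin c) :
    strategyValue T ρ u f = ∑ z, kyFan 1 (condStateA ρ (u z)) := by
  refine Finset.sum_congr rfl fun z _ => ?_
  rw [Finset.sum_eq_single ⟨0, ha⟩ (fun w _ hw => by rw [hT, if_neg fun h => hw (Fin.ext h),
    zero_mul]) (by simp), hT, if_pos rfl, one_mul]

lemma R0_smul_one_kronecker_le (ha : 0 < a) (hT : ∀ w z, T w z = if w.1 = 0 then 1 else 0)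
    {α : ℝ} (hα : 0 ≤ α) {B : Mat b} (hB : IsDensity B) :
    R0 T (((α : ℂ) • (1 : Mat a)) ⊗ₖ B) ≤ α := by
  rw [R0_eq_iSup_strategyValue]
  refine Real.iSup_le (fun u => Real.iSup_le (fun f => ?_) hα) hα
  set q : Fin b → ℝ := fun z => (star (u.1 z) ⬝ᵥ B *ᵥ u.1 z).re
  have hq : ∀ z, star (u.1 z) ⬝ᵥ B *ᵥ u.1 z = q z := fun z =>
    Complex.eq_re_of_ofReal_le (Complex.ofReal_zero ▸ hB.1.dotProduct_mulVec_nonneg (u.1 z))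
  have hq_nonneg : ∀ z, 0 ≤ q z := fun z => by
    rw [← Complex.zero_le_real, ← hq z]
    exact hB.1.dotProduct_mulVec_nonneg _
  have hsum : ∑ z, q z = 1 := by
    rw [← Complex.ofReal_inj, Complex.ofReal_sum, ← Finset.sum_congr rfl fun z _ => hq z,
      u.2.sum_star_dotProduct_mulVec, hB.2, Complex.ofReal_one]
  rw [strategyValue_of_eq_ite ha hT]
  calc ∑ z, kyFan 1 (condStateA (((α : ℂ) • (1 : Mat a)) ⊗ₖ B) (u.1 z))
      ≤ ∑ z, q z * α := Finset.sum_le_sum fun z _ => by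
        rw [condStateA_kronecker (u.2.star_dotProduct_self z), hq z, smul_smul,
          ← Complex.ofReal_mul]
        simpa using kyFan_smul_one_le (mul_nonneg (hq_nonneg z) hα) 1
    _ = α := by rw [← Finset.sum_mul, hsum, one_mul]

end ProductState

/-- product states are strictly game-majorized by the maximally
entangled state. -/
theorem product_state_game_majorized {d : ℕ} (hd : 2 ≤ d)
    (σA σB : Mat d) (hσA : IsDensity σA) (hσB : IsDensity σB) :
    (∀ (c : ℕ), 0 < c → ∀ T : Matrix (Fin d) (Fin c) ℝ, ColStochastic T →
        ∀ p : ℝ, 0 ≤ p → p ≤ 1 → Rgame T p (σA ⊗ₖ σB) ≤ Rgame T p (maxEnt d)) ∧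
    (∀ (c : ℕ), 0 < c → ∀ T : Matrix (Fin d) (Fin c) ℝ,
        (∀ w z, T w z = if w.1 = 0 then 1 else 0) →
        Rgame T 1 (σA ⊗ₖ σB) ≤ 1 / (d : ℝ) ∧ (1 / (d : ℝ) < 1 ∧ Rgame T 1 (maxEnt d) = 1)) := by
  have hd0 : 0 < d := by omega
  have hprod : IsDensity (σA ⊗ₖ σB) :=
    ⟨hσA.1.kronecker hσB.1, by rw [Matrix.trace_kronecker, hσA.2, hσB.2, mul_one]⟩
  refine ⟨fun c hc T hT p hp0 hp1 => ?_, fun c hc T hTguess => ?_⟩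
  · rw [Rgame_maxEnt hd0 hc hT]
    exact Rgame_le_one hT hprod hp0 hp1
  have hT := colStochastic_of_eq_ite hd0 hTguess
  refine ⟨?_, (div_lt_one (by positivity)).2 (by exact_mod_cast hd), Rgame_maxEnt hd0 hc hT 1⟩
  obtain ⟨v, hv, hunbiased⟩ :=
    exists_isRankOneMeas_star_dotProduct_mulVec_eq hd0 hσA.1.isHermitian
  have hpinch : pinchA v (σA ⊗ₖ σB) = (((1 / d : ℝ) : ℂ) • (1 : Mat d)) ⊗ₖ σB := by
    rw [pinchA_kronecker hv hunbiased, hσA.2]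
    push_cast
    rfl
  calc Rgame T 1 (σA ⊗ₖ σB)
      = ⨅ v' : {v' : Fin d → Fin d → ℂ // IsRankOneMeas v'}, R0 T (pinchA v'.1 (σA ⊗ₖ σB)) := by
        rw [Rgame_eq]
        ring
    _ ≤ R0 T (pinchA v (σA ⊗ₖ σB)) := iInf_R0_pinchA_le hT.1 hv _
    _ ≤ 1 / d := hpinch ▸ R0_smul_one_kronecker_le hd0 hTguess (by positivity) hσB

end
end
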